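/- If every team in a league outcome with n teams has total points exactly 3(n−1), then no match of the outcome ends in a draw. -/

import Mathlib

open Finset

inductive MatchResult : Type
  | homeWin : MatchResult
  | draw : MatchResult
  | awayWin : MatchResult
  deriving DecidableEq

instance : Fintype MatchResult :=
  Fintype.ofList [.homeWin, .draw, .awayWin] (by intro x; cases x <;> simp)

/-- A league outcome: a result for each ordered pair of distinct teams
(the first component is the home team). -/
abbrev LeagueOutcome (n : ℕ) : Type :=
  {p : Fin n × Fin n // p.1 ≠ p.2} → MatchResult

/-- Points earned by the home team. -/
def homePts : MatchResult → ℕ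
  | .homeWin => 3
  | .draw => 1
  | .awayWin => 0

/-- Points earned by the away team. -/
def awayPts : MatchResult → ℕ
  | .homeWin => 0
  | .draw => 1
  | .awayWin => 3

/-- Total points of team `i`: sum over all matches of the points `i` earns in them. -/
def totalPoints {n : ℕ} (r : LeagueOutcome n) (i : Fin n) : ℕ :=
  ∑ m : {p : Fin n × Fin n // p.1 ≠ p.2},
    ((if m.val.1 = i then homePts (r m) else 0) +
     (if m.val.2 = i then awayPts (r m) else 0))

/-- Total points the other teams earn in their matches against team `i`. -/
def oppPoints {n : ℕ} (r : LeagueOutcome n) (i : Fin n) : ℕ :=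
  ∑ m : {p : Fin n × Fin n // p.1 ≠ p.2},
    ((if m.val.1 = i then awayPts (r m) else 0) +
     (if m.val.2 = i then homePts (r m) else 0))

/-- Number of matches that team `i` wins. -/
def wins {n : ℕ} (r : LeagueOutcome n) (i : Fin n) : ℕ :=
  (Finset.univ.filter (fun m : {p : Fin n × Fin n // p.1 ≠ p.2} =>
    (m.val.1 = i ∧ r m = .homeWin) ∨ (m.val.2 = i ∧ r m = .awayWin))).card

/-- Number of matches that team `i` draws. -/
def draws {n : ℕ} (r : LeagueOutcome n) (i : Fin n) : ℕ :=
  (Finset.univ.filter (fun m : {p : Fin n × Fin n // p.1 ≠ p.2} =>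
    (m.val.1 = i ∨ m.val.2 = i) ∧ r m = .draw)).card

/-- Number of matches that team `i` loses. -/
def losses {n : ℕ} (r : LeagueOutcome n) (i : Fin n) : ℕ :=
  (Finset.univ.filter (fun m : {p : Fin n × Fin n // p.1 ≠ p.2} =>
    (m.val.1 = i ∧ r m = .awayWin) ∨ (m.val.2 = i ∧ r m = .homeWin))).card

/-! Every match hands out 3 points in total, except a draw, which hands out only 2. Summing the
points of all teams therefore gives at most `3 n (n - 1)`, with equality only if no match is drawn;
and `3 (n - 1)` points per team add up to exactly that. -/

theorem Fintype.card_subtype_fst_ne_snd (α : Type*) [Fintype α] [DecidableEq α] :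
    Fintype.card {p : α × α // p.1 ≠ p.2} = Fintype.card α * (Fintype.card α - 1) := by
  have hoffDiag : ({p | p.1 ≠ p.2} : Finset (α × α)) = Finset.univ.offDiag := by ext; simp
  rw [Fintype.card_subtype, hoffDiag, Finset.offDiag_card, Finset.card_univ, Nat.mul_sub_one]

theorem homePts_add_awayPts_le (x : MatchResult) : homePts x + awayPts x ≤ 3 := by
  cases x <;> decide

theorem sum_totalPoints {n : ℕ} (r : LeagueOutcome n) :
    ∑ i, totalPoints r i = ∑ m, (homePts (r m) + awayPts (r m)) := by
  simp only [totalPoints, Finset.sum_comm (γ := Fin n), Finset.sum_add_distrib, Finset.sum_ite_eq,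
    Finset.mem_univ, if_true]

theorem sum_totalPoints_lt_of_draw {n : ℕ} (r : LeagueOutcome n)
    {m : {p : Fin n × Fin n // p.1 ≠ p.2}} (hm : r m = .draw) :
    ∑ i, totalPoints r i < 3 * (n * (n - 1)) :=
  calc ∑ i, totalPoints r i = ∑ m, (homePts (r m) + awayPts (r m)) := sum_totalPoints r
    _ < ∑ _m : {p : Fin n × Fin n // p.1 ≠ p.2}, 3 :=
      Finset.sum_lt_sum (fun x _ => homePts_add_awayPts_le (r x))
        ⟨m, Finset.mem_univ m, by rw [hm]; decide⟩
    _ = 3 * (n * (n - 1)) := by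
      rw [Finset.sum_const, Finset.card_univ, Fintype.card_subtype_fst_ne_snd, Fintype.card_fin,
        smul_eq_mul, mul_comm]

/-- if every team has exactly `3(n−1)` points, no match is a draw. -/
theorem no_draws_of_max_score (n : ℕ) (r : LeagueOutcome n)
    (h : ∀ i, totalPoints r i = 3 * (n - 1)) :
    ∀ m, r m ≠ MatchResult.draw := by
  intro m hm
  have hsum : ∑ i, totalPoints r i = 3 * (n * (n - 1)) := by
    simp only [h, Finset.sum_const, Finset.card_univ, Fintype.card_fin, smul_eq_mul, mul_left_comm]
  exact (sum_totalPoints_lt_of_draw r hm).ne hsum
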